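/- In an AL-monoid, if a ≤ b ≤ c then c*b = (c*a)*(b*a) and b*a ≤ c*a. -/
import Mathlib

/-- An Autometrized lattice ordered monoid (AL-monoid). -/
class ALMonoid (A : Type*) extends Lattice A, AddCommMonoid A where
  amul : A → A → A
  add_le_add_left' : ∀ a b : A, a ≤ b → ∀ c : A, c + a ≤ c + b
  amul_core : ∀ a b : A, amul a (a ⊓ b) + b = a ⊔ b
  add_contract : ∀ a x y : A, amul (a + x) (a + y) ≤ amul x y
  sup_contract : ∀ a x y : A, amul (a ⊔ x) (a ⊔ y) ≤ amul x y
  inf_contract : ∀ a x y : A, amul (a ⊓ x) (a ⊓ y) ≤ amul x y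
  amul_contract : ∀ a x y : A, amul (amul a x) (amul a y) ≤ amul x y
  inf_amul_sup : ∀ a b : A, amul a (a ⊔ b) ⊓ amul b (a ⊔ b) = 0
  amul_nonneg : ∀ a b : A, 0 ≤ amul a b
  amul_eq_zero_iff : ∀ a b : A, amul a b = 0 ↔ a = b
  amul_comm : ∀ a b : A, amul a b = amul b a
  amul_triangle : ∀ a b c : A, amul a b ≤ amul a c + amul c b

open ALMonoid

infixl:70 " ⋆ " => ALMonoid.amul

theorem stmt16 {A : Type*} [ALMonoid A] (a b c : A)
    (hab : a ≤ b) (hbc : b ≤ c) :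
    c ⋆ b = (c ⋆ a) ⋆ (b ⋆ a) ∧ b ⋆ a ≤ c ⋆ a := by
  have hb : b ⋆ a + a = b := by
    have h := amul_core b a
    rwa [inf_eq_right.mpr hab, sup_eq_left.mpr hab] at h
  have hc : c ⋆ a + a = c := by
    have h := amul_core c a
    rwa [inf_eq_right.mpr (hab.trans hbc), sup_eq_left.mpr (hab.trans hbc)] at h
  constructor
  · apply le_antisymm
    · have h := add_contract a (c ⋆ a) (b ⋆ a)
      rwa [add_comm a (c ⋆ a), hc, add_comm a (b ⋆ a), hb] at h
    · have h := amul_contract a c b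
      rwa [amul_comm a c, amul_comm a b] at h
  · have h := inf_contract b c a
    rwa [inf_eq_left.mpr hbc, inf_eq_right.mpr hab] at h
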